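/- arXiv:2603.01375 — 3 statements merged into one kernel-verified Lean document; each statement's English description precedes it below -/
import Mathlib

section
/- Let Y be a finite nonempty type, let p and q be pmfs on Y with p(y) > 0 and q(y) > 0 for all y, let β > 0, and let r : Y → ℝ satisfy r(y) ≤ 0 for all y. Set Z = Σ_y p(y)·exp(r(y)/β) and p̃(y) = p(y)·exp(r(y)/β) / Z. Then D(q‖p̃) ≤ D(q‖p) − (1/β)·Σ_y q(y)·r(y). -/
/-- Ideal Gain bound: with nonpositive rewards `r(y) ≤ 0`,
`D(q‖p̃) ≤ D(q‖p) − (1/β)·Σ_y q(y)·r(y)` for the reward-weighted pmf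
`p̃(y) = p(y)·exp(r(y)/β)/Z`. -/
theorem kl_reward_reweighting_bound
    {Y : Type*} [Fintype Y] [Nonempty Y]
    (p q : Y → ℝ) (hp : ∀ y, 0 < p y) (hpsum : ∑ y, p y = 1)
    (hq : ∀ y, 0 < q y) (hqsum : ∑ y, q y = 1)
    (β : ℝ) (hβ : 0 < β)
    (r : Y → ℝ) (hr : ∀ y, r y ≤ 0)
    (Z : ℝ) (hZ : Z = ∑ y, p y * Real.exp (r y / β)) :
    ∑ y, q y * Real.log (q y / (p y * Real.exp (r y / β) / Z))
      ≤ ∑ y, q y * Real.log (q y / p y) - (1 / β) * ∑ y, q y * r y := by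
  have hZpos : 0 < Z := by
    rw [hZ]
    exact Finset.sum_pos (fun y _ => mul_pos (hp y) (Real.exp_pos _)) Finset.univ_nonempty
  have hZle : Z ≤ 1 := by
    rw [hZ, ← hpsum]
    refine Finset.sum_le_sum fun y _ => ?_
    have : Real.exp (r y / β) ≤ 1 := by
      rw [Real.exp_le_one_iff]
      exact div_nonpos_of_nonpos_of_nonneg (hr y) hβ.le
    nlinarith [hp y]
  have key : ∀ y, q y * Real.log (q y / (p y * Real.exp (r y / β) / Z))
      = q y * Real.log (q y / p y) - q y * (r y / β) + q y * Real.log Z := by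
    intro y
    have hqy := hq y
    have hpy := hp y
    have he : (0:ℝ) < Real.exp (r y / β) := Real.exp_pos _
    rw [Real.log_div hqy.ne' (by positivity), Real.log_div (by positivity) hZpos.ne',
      Real.log_mul hpy.ne' he.ne', Real.log_exp, Real.log_div hqy.ne' hpy.ne']
    ring
  have hsum : ∑ y, q y * Real.log (q y / (p y * Real.exp (r y / β) / Z))
      = ∑ y, q y * Real.log (q y / p y) - (1 / β) * ∑ y, q y * r y + Real.log Z := by
    simp only [key]
    rw [Finset.sum_add_distrib, Finset.sum_sub_distrib, ← Finset.sum_mul, hqsum, one_mul,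
      Finset.mul_sum]
    congr 1
    congr 1
    exact Finset.sum_congr rfl fun y _ => by ring
  have hlog : Real.log Z ≤ 0 := Real.log_nonpos hZpos.le hZle
  linarith [hsum.le]
end

section
/- Let Y be a finite nonempty type, let n be a natural number, let L ≥ 0, and let p : Y → ℝⁿ → ℝ be such that: p y θ > 0 for all y and θ, Σ_y p y θ = 1 for all θ, and for each y the function θ ↦ log (p y θ) is differentiable on ℝⁿ with L-Lipschitz gradient. Then for all θ₀, θ₁ ∈ ℝⁿ, D(p(·, θ₀) ‖ p(·, θ₁)) ≤ (L/2)·‖θ₁ − θ₀‖². -/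
/-! Each `log p(y, ·)` has an `L`-Lipschitz derivative, so by the descent lemma
`log p(y, θ₀) - log p(y, θ₁) ≤ -D_y(θ₁ - θ₀) + (L/2)‖θ₁ - θ₀‖²`, where `D_y` is the score
`fderiv (log p(y, ·)) θ₀`. Averaging against `p(·, θ₀)` kills the linear term: differentiating
`∑_y p(y, θ) = 1` shows that the score has mean zero. -/

open Real Set NNReal

section Smoothness

variable {E F : Type*} [NormedAddCommGroup E] [NormedSpace ℝ E]
  [NormedAddCommGroup F] [NormedSpace ℝ F]

theorem norm_sub_sub_fderiv_le_of_lipschitzWith_fderiv {f : E → F} {L : ℝ≥0}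
    (hf : Differentiable ℝ f) (hlip : LipschitzWith L (fderiv ℝ f)) (x y : E) :
    ‖f y - f x - fderiv ℝ f x (y - x)‖ ≤ L / 2 * ‖y - x‖ ^ 2 := by
  set v := y - x
  set g : ℝ → F := fun t => f (x + t • v) - f x - t • fderiv ℝ f x v
  have hg : ∀ t : ℝ, HasDerivAt g (fderiv ℝ f (x + t • v) v - fderiv ℝ f x v) t := by
    intro t
    have hline : HasDerivAt (fun s : ℝ => x + s • v) v t := by
      simpa using ((hasDerivAt_id t).smul_const v).const_add x
    have hcomp := (hf (x + t • v)).hasFDerivAt.comp_hasDerivAt t hline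
    simpa using (hcomp.sub_const (f x)).fun_sub ((hasDerivAt_id t).smul_const (fderiv ℝ f x v))
  have hB : ∀ t : ℝ, HasDerivAt (fun s : ℝ => L / 2 * s ^ 2 * ‖v‖ ^ 2) (L * t * ‖v‖ ^ 2) t := by
    intro t
    refine (((hasDerivAt_pow 2 t).const_mul (L / 2 : ℝ)).mul_const (‖v‖ ^ 2)).congr_deriv ?_
    simp only [Nat.cast_ofNat, Nat.add_one_sub_one, pow_one]
    ring
  have hbound : ∀ t ∈ Ico (0 : ℝ) 1,
      ‖fderiv ℝ f (x + t • v) v - fderiv ℝ f x v‖ ≤ L * t * ‖v‖ ^ 2 := by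
    intro t ht
    calc ‖fderiv ℝ f (x + t • v) v - fderiv ℝ f x v‖
        = ‖(fderiv ℝ f (x + t • v) - fderiv ℝ f x) v‖ := rfl
      _ ≤ ‖fderiv ℝ f (x + t • v) - fderiv ℝ f x‖ * ‖v‖ := ContinuousLinearMap.le_opNorm _ _
      _ ≤ L * ‖t • v‖ * ‖v‖ := by
          gcongr
          simpa [dist_eq_norm] using hlip.dist_le_mul (x + t • v) x
      _ = L * t * ‖v‖ ^ 2 := by
          rw [norm_smul, Real.norm_of_nonneg ht.1]; ring
  have := image_norm_le_of_norm_deriv_right_le_deriv_boundary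
    (fun t _ => (hg t).continuousAt.continuousWithinAt) (fun t _ => (hg t).hasDerivWithinAt)
    (by simp [g]) hB hbound (right_mem_Icc.2 zero_le_one)
  simpa [g, v] using this

end Smoothness

theorem lipschitzWith_fderiv_of_lipschitzWith_gradient {E : Type*} [NormedAddCommGroup E]
    [InnerProductSpace ℝ E] [CompleteSpace E] {f : E → ℝ} {L : ℝ≥0}
    (h : LipschitzWith L (gradient f)) : LipschitzWith L (fderiv ℝ f) := by
  have hfderiv : fderiv ℝ f = InnerProductSpace.toDual ℝ E ∘ gradient f := by
    funext x
    simp [gradient]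
  rw [hfderiv]
  simpa using (InnerProductSpace.toDual ℝ E).lipschitz.comp h

section Score

variable {Y E : Type*} [Fintype Y] [NormedAddCommGroup E] [NormedSpace ℝ E]

theorem hasFDerivAt_of_hasFDerivAt_log {p : E → ℝ} {D : StrongDual ℝ E} {θ : E}
    (hpos : ∀ θ, 0 < p θ) (h : HasFDerivAt (fun θ => log (p θ)) D θ) :
    HasFDerivAt p (p θ • D) θ := by
  have hexp := (hasDerivAt_exp (log (p θ))).comp_hasFDerivAt θ h
  simpa only [Function.comp_def, exp_log (hpos _)] using hexp

theorem sum_mul_fderiv_log_eq_zero {p : Y → E → ℝ} {θ : E} (hpos : ∀ y θ, 0 < p y θ)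
    (hsum : ∀ θ, ∑ y, p y θ = 1) (hdiff : ∀ y, DifferentiableAt ℝ (fun θ => log (p y θ)) θ)
    (v : E) : ∑ y, p y θ * fderiv ℝ (fun θ => log (p y θ)) θ v = 0 := by
  have hderiv : HasFDerivAt (fun θ => ∑ y, p y θ)
      (∑ y, p y θ • fderiv ℝ (fun θ => log (p y θ)) θ) θ :=
    HasFDerivAt.fun_sum fun y _ => hasFDerivAt_of_hasFDerivAt_log (hpos y) (hdiff y).hasFDerivAt
  have hconst : HasFDerivAt (fun θ => ∑ y, p y θ) (0 : StrongDual ℝ E) θ := by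
    simpa only [hsum] using hasFDerivAt_const (1 : ℝ) θ
  simpa using congrArg (· v) (hderiv.unique hconst)

theorem sum_mul_log_div_le_of_lipschitzWith_fderiv_log {p : Y → E → ℝ} {L : ℝ≥0}
    (hpos : ∀ y θ, 0 < p y θ) (hsum : ∀ θ, ∑ y, p y θ = 1)
    (hdiff : ∀ y, Differentiable ℝ (fun θ => log (p y θ)))
    (hlip : ∀ y, LipschitzWith L (fderiv ℝ fun θ => log (p y θ))) (θ₀ θ₁ : E) :
    ∑ y, p y θ₀ * log (p y θ₀ / p y θ₁) ≤ L / 2 * ‖θ₁ - θ₀‖ ^ 2 := by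
  set D := fun y => fderiv ℝ (fun θ => log (p y θ)) θ₀
  set c := (L : ℝ) / 2 * ‖θ₁ - θ₀‖ ^ 2
  have hdescent : ∀ y, log (p y θ₀) - log (p y θ₁) ≤ -D y (θ₁ - θ₀) + c := fun y => by
    have h : |log (p y θ₁) - log (p y θ₀) - D y (θ₁ - θ₀)| ≤ c :=
      norm_sub_sub_fderiv_le_of_lipschitzWith_fderiv (hdiff y) (hlip y) θ₀ θ₁
    linarith [neg_abs_le (log (p y θ₁) - log (p y θ₀) - D y (θ₁ - θ₀))]
  calc ∑ y, p y θ₀ * log (p y θ₀ / p y θ₁)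
      = ∑ y, p y θ₀ * (log (p y θ₀) - log (p y θ₁)) := by
        simp only [log_div (hpos _ θ₀).ne' (hpos _ θ₁).ne']
    _ ≤ ∑ y, p y θ₀ * (-D y (θ₁ - θ₀) + c) := by
        gcongr with y
        exacts [(hpos y θ₀).le, hdescent y]
    _ = -∑ y, p y θ₀ * D y (θ₁ - θ₀) + (∑ y, p y θ₀) * c := by
        simp only [mul_add, mul_neg, Finset.sum_add_distrib, Finset.sum_neg_distrib,
          Finset.sum_mul]
    _ = c := by
        rw [sum_mul_fderiv_log_eq_zero hpos hsum (fun y => hdiff y θ₀), hsum]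
        ring

end Score

theorem kl_smoothness_bound_general
    {Y : Type*} [Fintype Y] (n : ℕ)
    (L : ℝ) (hL : 0 ≤ L)
    (p : Y → EuclideanSpace ℝ (Fin n) → ℝ)
    (hpos : ∀ y θ, 0 < p y θ)
    (hsum : ∀ θ, ∑ y, p y θ = 1)
    (hdiff : ∀ y, Differentiable ℝ (fun θ => Real.log (p y θ)))
    (hlip : ∀ y, LipschitzWith ⟨L, hL⟩
      (fun θ => gradient (fun θ' => Real.log (p y θ')) θ))
    (θ₀ θ₁ : EuclideanSpace ℝ (Fin n)) :
    ∑ y, p y θ₀ * Real.log (p y θ₀ / p y θ₁) ≤ (L / 2) * ‖θ₁ - θ₀‖ ^ 2 :=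
  sum_mul_log_div_le_of_lipschitzWith_fderiv_log hpos hsum hdiff
    (fun y => lipschitzWith_fderiv_of_lipschitzWith_gradient (hlip y)) θ₀ θ₁

/-- quadratic KL bound under L-smooth log-policy: if each
`θ ↦ log (p y θ)` is differentiable with `L`-Lipschitz gradient, `p y θ > 0`
everywhere, and `Σ_y p y θ = 1` for all `θ`, then
`D(p(·,θ₀) ‖ p(·,θ₁)) ≤ (L/2)·‖θ₁ − θ₀‖²`. -/
theorem kl_smoothness_bound
    {Y : Type*} [Fintype Y] [Nonempty Y] (n : ℕ)
    (L : ℝ) (hL : 0 ≤ L)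
    (p : Y → EuclideanSpace ℝ (Fin n) → ℝ)
    (hpos : ∀ y θ, 0 < p y θ)
    (hsum : ∀ θ, ∑ y, p y θ = 1)
    (hdiff : ∀ y, Differentiable ℝ (fun θ => Real.log (p y θ)))
    (hlip : ∀ y, LipschitzWith ⟨L, hL⟩
      (fun θ => gradient (fun θ' => Real.log (p y θ')) θ))
    (θ₀ θ₁ : EuclideanSpace ℝ (Fin n)) :
    ∑ y, p y θ₀ * Real.log (p y θ₀ / p y θ₁) ≤ (L / 2) * ‖θ₁ - θ₀‖ ^ 2 :=
  kl_smoothness_bound_general n L hL p hpos hsum hdiff hlip θ₀ θ₁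
end

section
/- Let Y be a finite nonempty type, let π* be a pmf on Y with π*(y) > 0 for all y, let β > 0, and let T be a natural number. Let π₀, …, π_T be pmfs on Y with strictly positive values, and for each t ∈ {1, …, T} let r_t : Y → ℝ satisfy r_t(y) ≤ 0 for all y; set Z_t = Σ_y π_{t−1}(y)·exp(r_t(y)/β) and π̃_t(y) = π_{t−1}(y)·exp(r_t(y)/β) / Z_t. Suppose there are reals ε₁, …, ε_T ≥ 0 such that D(π*‖π_t) ≤ D(π*‖π̃_t) + ε_t for each t. Then D(π*‖π_T) ≤ D(π*‖π₀) − (1/β)·Σ_{t=1}^{T} Σ_y π*(y)·r_t(y) + Σ_{t=1}^{T} ε_t. -/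
lemma kl_step
    {Y : Type*} [Fintype Y] [Nonempty Y]
    (pistar p : Y → ℝ) (hstar : ∀ y, 0 < pistar y) (hstarsum : ∑ y, pistar y = 1)
    (hp : ∀ y, 0 < p y) (hpsum : ∑ y, p y = 1)
    (β : ℝ) (hβ : 0 < β) (r : Y → ℝ) (hr : ∀ y, r y ≤ 0)
    (Z : ℝ) (hZ : Z = ∑ y, p y * Real.exp (r y / β))
    (q : Y → ℝ) (hq : ∀ y, q y = p y * Real.exp (r y / β) / Z) :
    ∑ y, pistar y * Real.log (pistar y / q y)
      ≤ ∑ y, pistar y * Real.log (pistar y / p y) - (1 / β) * ∑ y, pistar y * r y := by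
  have hZpos : 0 < Z := by
    rw [hZ]
    exact Finset.sum_pos (fun y _ => mul_pos (hp y) (Real.exp_pos _))
      Finset.univ_nonempty
  have hZle : Z ≤ 1 := by
    rw [hZ, ← hpsum]
    refine Finset.sum_le_sum fun y _ => ?_
    have : Real.exp (r y / β) ≤ 1 := by
      rw [Real.exp_le_one_iff]
      exact div_nonpos_of_nonpos_of_nonneg (hr y) hβ.le
    nlinarith [hp y]
  have hlogZ : Real.log Z ≤ 0 := Real.log_nonpos hZpos.le hZle
  have key : ∀ y, Real.log (pistar y / q y)
      = Real.log (pistar y / p y) - r y / β + Real.log Z := by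
    intro y
    have h1 : pistar y / q y = (pistar y / p y) * Real.exp (-(r y / β)) * Z := by
      rw [hq, Real.exp_neg]
      field_simp
    rw [h1, Real.log_mul (mul_pos (div_pos (hstar y) (hp y)) (Real.exp_pos _)).ne' hZpos.ne',
      Real.log_mul (div_pos (hstar y) (hp y)).ne' (Real.exp_pos _).ne', Real.log_exp]
    ring
  calc ∑ y, pistar y * Real.log (pistar y / q y)
      = ∑ y, (pistar y * Real.log (pistar y / p y) - (1/β) * (pistar y * r y)
          + Real.log Z * pistar y) := by
        refine Finset.sum_congr rfl fun y _ => ?_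
        rw [key y]; field_simp
    _ = ∑ y, pistar y * Real.log (pistar y / p y) - (1/β) * ∑ y, pistar y * r y
          + Real.log Z * 1 := by
        rw [Finset.sum_add_distrib, Finset.sum_sub_distrib, ← Finset.mul_sum,
          ← Finset.mul_sum, hstarsum]
    _ ≤ _ := by nlinarith

/-- Unified Convergence Bound: after `T` turns of co-adaptation with
nonpositive rewards `r t`, reward-weighted targets `πt t` built from `pol (t-1)`,
and per-turn approximation errors `ε t` satisfying
`D(π*‖pol t) ≤ D(π*‖πt t) + ε t`, we get
`D(π*‖pol T) ≤ D(π*‖pol 0) − (1/β)·Σ_t Σ_y π*(y)·r t y + Σ_t ε t`. -/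
theorem unified_convergence_bound
    {Y : Type*} [Fintype Y] [Nonempty Y]
    (pistar : Y → ℝ) (hstar : ∀ y, 0 < pistar y) (hstarsum : ∑ y, pistar y = 1)
    (β : ℝ) (hβ : 0 < β) (T : ℕ)
    (pol : ℕ → Y → ℝ)
    (hpolpos : ∀ t ≤ T, ∀ y, 0 < pol t y)
    (hpolsum : ∀ t ≤ T, ∑ y, pol t y = 1)
    (r : ℕ → Y → ℝ)
    (hr : ∀ t ∈ Finset.Icc 1 T, ∀ y, r t y ≤ 0)
    (Z : ℕ → ℝ)
    (hZ : ∀ t ∈ Finset.Icc 1 T, Z t = ∑ y, pol (t - 1) y * Real.exp (r t y / β))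
    (πt : ℕ → Y → ℝ)
    (hπt : ∀ t ∈ Finset.Icc 1 T, ∀ y,
      πt t y = pol (t - 1) y * Real.exp (r t y / β) / Z t)
    (ε : ℕ → ℝ) (hε : ∀ t ∈ Finset.Icc 1 T, 0 ≤ ε t)
    (happrox : ∀ t ∈ Finset.Icc 1 T,
      ∑ y, pistar y * Real.log (pistar y / pol t y)
        ≤ ∑ y, pistar y * Real.log (pistar y / πt t y) + ε t) :
    ∑ y, pistar y * Real.log (pistar y / pol T y)
      ≤ ∑ y, pistar y * Real.log (pistar y / pol 0 y)
        - (1 / β) * ∑ t ∈ Finset.Icc 1 T, ∑ y, pistar y * r t y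
        + ∑ t ∈ Finset.Icc 1 T, ε t := by
  induction T with
  | zero => simp
  | succ n ih =>
    have hle : ∀ t, t ≤ n → t ≤ n + 1 := fun t h => h.trans (Nat.le_succ n)
    have hIcc : ∀ t, t ∈ Finset.Icc 1 n → t ∈ Finset.Icc 1 (n + 1) := by
      intro t ht
      simp only [Finset.mem_Icc] at ht ⊢
      omega
    have IH := ih (fun t ht => hpolpos t (hle t ht)) (fun t ht => hpolsum t (hle t ht))
      (fun t ht => hr t (hIcc t ht)) (fun t ht => hZ t (hIcc t ht))
      (fun t ht => hπt t (hIcc t ht)) (fun t ht => hε t (hIcc t ht))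
      (fun t ht => happrox t (hIcc t ht))
    have hmem : n + 1 ∈ Finset.Icc 1 (n + 1) := by simp
    have hstep := kl_step pistar (pol n) hstar hstarsum (hpolpos n (Nat.le_succ n))
      (hpolsum n (Nat.le_succ n)) β hβ (r (n + 1)) (hr (n + 1) hmem) (Z (n + 1))
      (by simpa using hZ (n + 1) hmem) (πt (n + 1)) (by simpa using hπt (n + 1) hmem)
    have h1 := happrox (n + 1) hmem
    rw [Finset.sum_Icc_succ_top (by omega : 1 ≤ n + 1),
      Finset.sum_Icc_succ_top (by omega : 1 ≤ n + 1)]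
    have hexp : (1 / β) * (∑ t ∈ Finset.Icc 1 n, ∑ y, pistar y * r t y
        + ∑ y, pistar y * r (n + 1) y)
        = (1 / β) * ∑ t ∈ Finset.Icc 1 n, ∑ y, pistar y * r t y
          + (1 / β) * ∑ y, pistar y * r (n + 1) y := mul_add _ _ _
    linarith
end
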